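/- arXiv:2112.03746 — 2 statements merged into one kernel-verified Lean document; each statement's English description precedes it below -/
import Mathlib

section
/- Let Σ be a nonempty finite alphabet and L ⊆ Σ* a nonempty finite language. If a 1QFAC over Σ with k classical states recognizes L with cut-point λ isolated by ε for some λ ∈ (0,1) and ε > 0, then k ≥ max_{x∈L}|x| + 2, where |x| denotes the length of the string x. -/
noncomputable section

/-- The `n`-dimensional complex Hilbert space `ℂⁿ`. -/
abbrev QState (n : ℕ) := EuclideanSpace ℂ (Fin n)

/-- Apply a matrix to a vector of `ℂⁿ`. -/
def mApply {n : ℕ} (M : Matrix (Fin n) (Fin n) ℂ) (v : QState n) : QState n :=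
  Matrix.toEuclideanLin M v

/-- Myhill–Nerode equivalence: `x ≡_L y` iff `∀ z, xz ∈ L ↔ yz ∈ L`. -/
def mnEquiv {α : Type} (L : Set (List α)) (x y : List α) : Prop :=
  ∀ z : List α, x ++ z ∈ L ↔ y ++ z ∈ L

/-- Myhill–Nerode equivalence as a setoid. -/
def mnSetoid {α : Type} (L : Set (List α)) : Setoid (List α) where
  r := mnEquiv L
  iseqv := ⟨fun _ _ => Iff.rfl, fun h z => (h z).symm, fun h1 h2 z => (h1 z).trans (h2 z)⟩

/-- A 1QFAC: classical states `S` with initial state and transitions, an `n`-dimensional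
quantum part with a unit initial vector, a unitary for each (classical state, letter),
and an orthogonal projection (accepting measurement) for each classical state. -/
structure QFAC (Alph : Type) (S : Type) (n : ℕ) where
  s0 : S
  tr : S → Alph → S
  ψ0 : QState n
  ψ0_unit : ‖ψ0‖ = 1
  U : S → Alph → Matrix (Fin n) (Fin n) ℂ
  U_unitary : ∀ s σ, U s σ ∈ Matrix.unitaryGroup (Fin n) ℂ
  P : S → Matrix (Fin n) (Fin n) ℂ
  P_proj : ∀ s, (P s).conjTranspose = P s ∧ P s * P s = P s

namespace QFAC
variable {Alph S : Type} {n : ℕ}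

/-- `s_x`: the classical state reached after reading `x`. -/
def sState (A : QFAC Alph S n) (x : List Alph) : S := x.foldl A.tr A.s0

/-- `|ψ_x⟩`: the final quantum state after reading `x`. -/
def qState (A : QFAC Alph S n) (x : List Alph) : QState n :=
  (x.foldl (fun p σ => (A.tr p.1 σ, mApply (A.U p.1 σ) p.2)) (A.s0, A.ψ0)).2

/-- Acceptance probability `‖P_{s_x,acc}|ψ_x⟩‖²`. -/
def probAcc (A : QFAC Alph S n) (x : List Alph) : ℝ :=
  ‖mApply (A.P (A.sState x)) (A.qState x)‖ ^ 2

/-- Recognition with cut-point `lam` isolated by `ε`. -/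
def Recognizes (A : QFAC Alph S n) (L : Set (List Alph)) (lam ε : ℝ) : Prop :=
  (∀ x ∈ L, lam + ε ≤ A.probAcc x) ∧ (∀ x ∉ L, A.probAcc x ≤ lam - ε)

end QFAC

/-!
Reading the first `|x| + 2` prefixes of `x ++ [σ]` (for `x ∈ L`) must visit pairwise distinct
classical states. Otherwise there is a nonempty classical loop `v` after a prefix `u` of
`x = u ++ w`, so along `u vᵗ w` the classical part ends in the same state as along `u w`, while
the quantum part is `ψ_u` moved by the `t`-th power of one fixed unitary. Orbits of a unitary on
`ℂⁿ` are recurrent (they lie in a compact sphere), so for arbitrarily large `t` the acceptance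
probability of `u vᵗ w` is within `2ε` of that of `u w ∈ L`, yet `u vᵗ w ∉ L` once it is longer
than every word of the finite language `L`.
-/

theorem Isometry.iterate {X : Type*} [PseudoEMetricSpace X] {T : X → X} (hT : Isometry T) :
    ∀ k : ℕ, Isometry T^[k]
  | 0 => isometry_id
  | k + 1 => (hT.iterate k).comp hT

theorem Isometry.exists_iterate_dist_lt {X : Type*} [PseudoMetricSpace X] {T : X → X}
    (hT : Isometry T) {K : Set X} (hK : IsCompact K) {x : X} (hx : ∀ j, T^[j] x ∈ K) (N : ℕ)
    {η : ℝ} (hη : 0 < η) : ∃ t, N ≤ t ∧ dist (T^[t] x) x < η := by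
  obtain ⟨_, -, φ, hφ, hlim⟩ := hK.tendsto_subseq hx
  obtain ⟨J, hJ⟩ := Metric.cauchySeq_iff'.1 hlim.cauchySeq η hη
  have hgap : N + φ J ≤ φ (J + N) := add_comm N J ▸ hφ.add_le_nat N J
  refine ⟨φ (J + N) - φ J, by omega, ?_⟩
  calc dist (T^[φ (J + N) - φ J] x) x
      = dist (T^[φ J] (T^[φ (J + N) - φ J] x)) (T^[φ J] x) :=
        ((hT.iterate _).dist_eq _ _).symm
    _ = dist (T^[φ (J + N)] x) (T^[φ J] x) := by
        rw [← Function.iterate_add_apply, Nat.add_sub_cancel' (by omega)]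
    _ < η := hJ (J + N) (by omega)

theorem LinearIsometry.exists_iterate_dist_lt {R E : Type*} [Semiring R]
    [SeminormedAddCommGroup E] [Module R E] [ProperSpace E] (T : E →ₗᵢ[R] E) (x : E) (N : ℕ)
    {η : ℝ} (hη : 0 < η) : ∃ t, N ≤ t ∧ dist (T^[t] x) x < η :=
  T.isometry.exists_iterate_dist_lt (isCompact_closedBall 0 ‖x‖)
    (fun j => mem_closedBall_zero_iff.2 (by rw [← coe_pow, norm_map])) N hη

theorem List.foldl_flatten_replicate_of_foldl_eq {α β : Type*} {f : α → β → α} {a : α}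
    {v : List β} (hv : v.foldl f a = a) (t : ℕ) : (List.replicate t v).flatten.foldl f a = a := by
  induction t with
  | zero => rfl
  | succ t ih => rw [List.replicate_succ, List.flatten_cons, List.foldl_append, hv, ih]

namespace QFAC

variable {Alph S : Type} {n : ℕ} (A : QFAC Alph S n)

def unitaryOp (s : S) (σ : Alph) : QState n →ₗᵢ[ℂ] QState n where
  toLinearMap := Matrix.toEuclideanLin (A.U s σ)
  norm_map' v := ContinuousLinearMap.norm_map_of_mem_unitary
    (Unitary.map_mem (Matrix.toEuclideanCLM (n := Fin n) (𝕜 := ℂ)) (A.U_unitary s σ)) v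

def evolve : S → List Alph → QState n →ₗᵢ[ℂ] QState n
  | _, [] => LinearIsometry.id
  | s, σ :: x => (evolve (A.tr s σ) x).comp (A.unitaryOp s σ)

theorem foldl_step_eq (x : List Alph) (s : S) (φ : QState n) :
    x.foldl (fun p σ => (A.tr p.1 σ, mApply (A.U p.1 σ) p.2)) (s, φ)
      = (x.foldl A.tr s, A.evolve s x φ) := by
  induction x generalizing s φ with
  | nil => rfl
  | cons σ x ih => exact ih _ _

theorem evolve_append (s : S) (u w : List Alph) (φ : QState n) :
    A.evolve s (u ++ w) φ = A.evolve (u.foldl A.tr s) w (A.evolve s u φ) := by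
  induction u generalizing s φ with
  | nil => rfl
  | cons σ u ih => exact ih _ _

theorem evolve_flatten_replicate {s : S} {v : List Alph} (hv : v.foldl A.tr s = s) (t : ℕ) :
    ⇑(A.evolve s (List.replicate t v).flatten) = (A.evolve s v)^[t] := by
  induction t with
  | zero => rfl
  | succ t ih =>
    funext φ
    rw [List.replicate_succ, List.flatten_cons, evolve_append, hv, ih,
      Function.iterate_succ_apply]

theorem sState_append (u w : List Alph) : A.sState (u ++ w) = w.foldl A.tr (A.sState u) :=
  List.foldl_append

theorem probAcc_append (u w : List Alph) :
    A.probAcc (u ++ w) = ‖mApply (A.P (w.foldl A.tr (A.sState u)))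
      (A.evolve (A.sState u) w (A.qState u))‖ ^ 2 := by
  simp only [probAcc, qState, sState_append, foldl_step_eq, evolve_append]
  rfl

theorem exists_probAcc_pump_close {u v : List Alph} (hloop : A.sState (u ++ v) = A.sState u)
    (w : List Alph) (N : ℕ) {η : ℝ} (hη : 0 < η) :
    ∃ t, N ≤ t ∧
      |A.probAcc (u ++ ((List.replicate t v).flatten ++ w)) - A.probAcc (u ++ w)| < η := by
  set s := A.sState u
  have hv : v.foldl A.tr s = s := by rwa [sState_append] at hloop
  set f : QState n → ℝ := fun φ => ‖mApply (A.P (w.foldl A.tr s)) (A.evolve s w φ)‖ ^ 2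
  have hf : Continuous f :=
    ((LinearMap.continuous_of_finiteDimensional _).comp (A.evolve s w).continuous).norm.pow 2
  have hpump : ∀ t, A.probAcc (u ++ ((List.replicate t v).flatten ++ w)) =
      f ((A.evolve s v)^[t] (A.qState u)) := by
    intro t
    rw [probAcc_append, List.foldl_append, List.foldl_flatten_replicate_of_foldl_eq hv,
      evolve_append, List.foldl_flatten_replicate_of_foldl_eq hv, evolve_flatten_replicate A hv]
  obtain ⟨δ, hδ, hfδ⟩ := Metric.continuous_iff.1 hf (A.qState u) η hη
  obtain ⟨t, hNt, ht⟩ := (A.evolve s v).exists_iterate_dist_lt (A.qState u) N hδ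
  exact ⟨t, hNt, by rw [hpump, probAcc_append, ← Real.dist_eq]; exact hfδ _ ht⟩

variable {A} {L : Set (List Alph)} {lam ε : ℝ}

theorem Recognizes.eq_nil_of_sState_append_eq (hrec : A.Recognizes L lam ε) (hL : L.Finite)
    (hε : 0 < ε) {u v w : List Alph} (hw : u ++ w ∈ L)
    (hloop : A.sState (u ++ v) = A.sState u) : v = [] := by
  by_contra hv
  obtain ⟨N, hN⟩ := (hL.image List.length).bddAbove
  obtain ⟨t, hNt, hclose⟩ :=
    A.exists_probAcc_pump_close hloop w (N + 1) (by positivity : 0 < 2 * ε)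
  have hlong : t ≤ (u ++ ((List.replicate t v).flatten ++ w)).length := by
    have : 0 < v.length := List.length_pos_iff.2 hv
    simp only [List.length_append, List.length_flatten, List.map_replicate, List.sum_replicate,
      smul_eq_mul]
    nlinarith
  have hout : u ++ ((List.replicate t v).flatten ++ w) ∉ L :=
    fun hin => by have := hN ⟨_, hin, rfl⟩; omega
  have hacc := hrec.1 _ hw
  have hrej := hrec.2 _ hout
  linarith [(abs_lt.1 hclose).1]

theorem Recognizes.sState_take_injective (hrec : A.Recognizes L lam ε) (hL : L.Finite)
    (hε : 0 < ε) {x : List Alph} (hx : x ∈ L) (σ : Alph) :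
    Function.Injective fun i : Fin (x.length + 2) => A.sState ((x ++ [σ]).take i) := by
  refine Function.Injective.of_lt_imp_ne fun i j hij heq => ?_
  have hi : (i : ℕ) ≤ x.length := by omega
  have hstep : (x ++ [σ]).take i ++ ((x ++ [σ]).take j).drop i = (x ++ [σ]).take j := by
    have := List.take_append_drop i ((x ++ [σ]).take j)
    rwa [List.take_take, min_eq_left (Fin.le_iff_val_le_val.1 hij.le)] at this
  have hw : (x ++ [σ]).take i ++ x.drop i ∈ L := by
    rwa [List.take_append_of_le_length hi, List.take_append_drop]
  have hnil := hrec.eq_nil_of_sState_append_eq hL hε hw (by rw [hstep]; exact heq.symm)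
  simp only [List.drop_eq_nil_iff, List.length_take, List.length_append, List.length_singleton]
    at hnil
  omega

end QFAC

theorem stmt_7_general {Alph S : Type} [Nonempty Alph] [Fintype S] {n k : ℕ}
    (hk : Fintype.card S = k)
    (L : Set (List Alph)) (hLfin : L.Finite)
    (A : QFAC Alph S n) (lam ε : ℝ) (hε : 0 < ε)
    (hrec : A.Recognizes L lam ε) :
    ∀ x ∈ L, x.length + 2 ≤ k := by
  intro x hx
  obtain ⟨σ⟩ := ‹Nonempty Alph›
  simpa [hk] using Fintype.card_le_of_injective _ (hrec.sState_take_injective hLfin hε hx σ)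

/-- If a 1QFAC with `k` classical states recognizes a nonempty finite
language `L` with isolated cut-point, then `k ≥ max_{x∈L}|x| + 2`. -/
theorem stmt_7 {Alph S : Type} [Fintype Alph] [Nonempty Alph] [Fintype S] {n k : ℕ}
    (hk : Fintype.card S = k)
    (L : Set (List Alph)) (hLfin : L.Finite) (hLne : L.Nonempty)
    (A : QFAC Alph S n) (lam ε : ℝ) (hlam : 0 < lam ∧ lam < 1) (hε : 0 < ε)
    (hrec : A.Recognizes L lam ε) :
    ∀ x ∈ L, x.length + 2 ≤ k :=
  stmt_7_general hk L hLfin A lam ε hε hrec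
end
end

section
/- Fix λ ∈ (0,1) and ε > 0 with λ − ε > 0. Let q be a prime and let n be the minimal number of quantum basis states among all MO-1QFA over the unary alphabet {0} that recognize L(q) = {0^{zq} : z ∈ ℕ} with cut-point λ isolated by ε. Let p be a prime with p > (1 + 2/ε)^{2n}. If a 1QFAC over {0} with k' classical states and n' quantum basis states, where n' < n, recognizes L(pq) = {0^{zpq} : z ∈ ℕ} with cut-point λ isolated by ε, then k' ≥ pq. -/
noncomputable section

/-- An MO-1QFA over alphabet `Alph` with `n` quantum basis states. -/
structure MOQFA (Alph : Type) (n : ℕ) where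
  ψ0 : QState n
  ψ0_unit : ‖ψ0‖ = 1
  U : Alph → Matrix (Fin n) (Fin n) ℂ
  U_unitary : ∀ σ, U σ ∈ Matrix.unitaryGroup (Fin n) ℂ
  P : Matrix (Fin n) (Fin n) ℂ
  P_proj : P.conjTranspose = P ∧ P * P = P

namespace MOQFA
variable {Alph : Type} {n : ℕ}

def qState (A : MOQFA Alph n) (x : List Alph) : QState n :=
  x.foldl (fun v σ => mApply (A.U σ) v) A.ψ0

def probAcc (A : MOQFA Alph n) (x : List Alph) : ℝ := ‖mApply A.P (A.qState x)‖ ^ 2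

def Recognizes (A : MOQFA Alph n) (L : Set (List Alph)) (lam ε : ℝ) : Prop :=
  (∀ x ∈ L, lam + ε ≤ A.probAcc x) ∧ (∀ x ∉ L, A.probAcc x ≤ lam - ε)

end MOQFA

/-- The unary language `L(d) = {0^{zd} : z ∈ ℕ}` over the one-letter alphabet. -/
def Ld (d : ℕ) : Set (List Unit) := {x | d ∣ x.length}

/-!
A 1QFAC with fewer than `pq` classical states runs, on inputs `0^m`, through a classical
trajectory that becomes periodic with some period `r < pq`. Starting inside the cycle at a
position divisible by `pq` and reading one period per letter gives an MO-1QFA with the same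
`n'` quantum states recognizing `L(d)`, `d = pq / gcd(pq, r)`, a divisor of `pq` other than `1`.
If `q ∣ d`, a power of its unitary recognizes `L(q)` with `n' < n` states, contradicting the
minimality of `n`. Otherwise `d = p`, and a volume packing argument in `ℂ^n' ≅ ℝ^(2n')` shows that
the states `U^i ψ₀, i < p,` cannot be `ε`-separated, so two inputs `0^p` and `0^j`, `p ∤ j`, end
in states too close to be separated by the isolated cut-point.
-/

open Function Metric MeasureTheory Module

theorem card_le_of_pairwise_le_dist {E ι : Type*} [NormedAddCommGroup E] [NormedSpace ℝ E]
    [FiniteDimensional ℝ E] [Fintype ι] {ε : ℝ} (hε : 0 < ε) (v : ι → E)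
    (hv : ∀ i, ‖v i‖ ≤ 1) (hsep : Pairwise fun i j => ε ≤ dist (v i) (v j)) :
    (Fintype.card ι : ℝ) ≤ (1 + 2 / ε) ^ finrank ℝ E := by
  borelize E
  set μ : Measure E := Measure.addHaar
  have hε2 : 0 < ε / 2 := half_pos hε
  have hdisj : Pairwise (Disjoint on fun i => ball (v i) (ε / 2)) := fun i j hij =>
    ball_disjoint_ball (by linarith [hsep hij] : ε / 2 + ε / 2 ≤ dist (v i) (v j))
  have hsub : (⋃ i, ball (v i) (ε / 2)) ⊆ ball 0 (1 + ε / 2) :=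
    Set.iUnion_subset fun i => ball_subset_ball' (by simpa using by linarith [hv i])
  have hvol := measure_mono (μ := μ) hsub
  rw [measure_iUnion hdisj fun _ => measurableSet_ball, tsum_fintype] at hvol
  simp only [Measure.addHaar_ball_of_pos μ _ hε2, Measure.addHaar_ball_of_pos μ _
    (by positivity : (0 : ℝ) < 1 + ε / 2), Finset.sum_const, Finset.card_univ, nsmul_eq_mul,
    ← mul_assoc] at hvol
  have hB0 : μ (ball 0 1) ≠ 0 := (measure_ball_pos μ _ one_pos).ne'
  have hBtop : μ (ball 0 1) ≠ ⊤ := measure_ball_lt_top.ne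
  rw [ENNReal.mul_le_mul_iff_left hB0 hBtop, ← ENNReal.ofReal_natCast,
    ← ENNReal.ofReal_mul (by positivity), ENNReal.ofReal_le_ofReal_iff (by positivity)] at hvol
  rw [show 1 + 2 / ε = (1 + ε / 2) / (ε / 2) by field_simp; ring, div_pow,
    le_div_iff₀ (by positivity)]
  exact hvol

theorem finrank_real_qState (n : ℕ) : finrank ℝ (QState n) = 2 * n := by
  rw [← finrank_mul_finrank ℝ ℂ (QState n), Complex.finrank_real_complex, finrank_euclideanSpace,
    Fintype.card_fin]

section mApply
variable {n : ℕ}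

theorem mApply_eq_toEuclideanCLM (M : Matrix (Fin n) (Fin n) ℂ) (v : QState n) :
    mApply M v = Matrix.toEuclideanCLM (n := Fin n) (𝕜 := ℂ) M v := rfl

theorem mApply_mul (M N : Matrix (Fin n) (Fin n) ℂ) (v : QState n) :
    mApply (M * N) v = mApply M (mApply N v) := by
  simp only [mApply_eq_toEuclideanCLM, map_mul]; rfl

theorem mApply_one (v : QState n) : mApply 1 v = v := by
  simp only [mApply_eq_toEuclideanCLM, map_one]; rfl

theorem mApply_pow_add (M : Matrix (Fin n) (Fin n) ℂ) (i j : ℕ) (v : QState n) :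
    mApply (M ^ (i + j)) v = mApply (M ^ i) (mApply (M ^ j) v) := by
  rw [pow_add, mApply_mul]

theorem mApply_sub (M : Matrix (Fin n) (Fin n) ℂ) (v w : QState n) :
    mApply M (v - w) = mApply M v - mApply M w :=
  map_sub _ v w

theorem norm_mApply_of_mem_unitaryGroup {U : Matrix (Fin n) (Fin n) ℂ}
    (hU : U ∈ Matrix.unitaryGroup (Fin n) ℂ) (v : QState n) : ‖mApply U v‖ = ‖v‖ :=
  ContinuousLinearMap.norm_map_of_mem_unitary
    (Unitary.map_mem (Matrix.toEuclideanCLM (n := Fin n) (𝕜 := ℂ)) hU) v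

theorem norm_mApply_le_of_isProj {P : Matrix (Fin n) (Fin n) ℂ}
    (hP : P.conjTranspose = P ∧ P * P = P) (v : QState n) : ‖mApply P v‖ ≤ ‖v‖ := by
  have hP' : IsStarProjection (Matrix.toEuclideanCLM (n := Fin n) (𝕜 := ℂ) P) :=
    IsStarProjection.map ⟨hP.2, hP.1⟩ _
  calc ‖mApply P v‖ ≤ ‖Matrix.toEuclideanCLM (n := Fin n) (𝕜 := ℂ) P‖ * ‖v‖ :=
        (Matrix.toEuclideanCLM (n := Fin n) (𝕜 := ℂ) P).le_opNorm v
    _ ≤ ‖v‖ := mul_le_of_le_one_left (norm_nonneg v) hP'.norm_le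

theorem sq_norm_mApply_sub_le {P : Matrix (Fin n) (Fin n) ℂ}
    (hP : P.conjTranspose = P ∧ P * P = P) {a b : QState n} (ha : ‖a‖ = 1) (hb : ‖b‖ = 1) :
    ‖mApply P a‖ ^ 2 - ‖mApply P b‖ ^ 2 ≤ 2 * ‖a - b‖ := by
  have hPa : ‖mApply P a‖ ≤ 1 := ha ▸ norm_mApply_le_of_isProj hP a
  have hPb : ‖mApply P b‖ ≤ 1 := hb ▸ norm_mApply_le_of_isProj hP b
  have hdiff : ‖mApply P a‖ - ‖mApply P b‖ ≤ ‖a - b‖ :=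
    (norm_sub_norm_le _ _).trans (mApply_sub P a b ▸ norm_mApply_le_of_isProj hP _)
  have hsum : 0 ≤ ‖mApply P a‖ + ‖mApply P b‖ := by positivity
  nlinarith [mul_le_mul_of_nonneg_right hdiff hsum, norm_nonneg (a - b)]

end mApply

theorem mem_Ld_iff {d : ℕ} {x : List Unit} : x ∈ Ld d ↔ d ∣ x.length := Iff.rfl

namespace MOQFA
variable {n : ℕ}

theorem qState_eq (B : MOQFA Unit n) (u : List Unit) :
    B.qState u = mApply (B.U () ^ u.length) B.ψ0 := by
  induction u using List.reverseRecOn with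
  | nil => exact (mApply_one _).symm
  | append_singleton u _ ih =>
    rw [qState, List.foldl_append, ← qState, ih, List.length_append, List.length_singleton,
      pow_succ', mApply_mul]
    rfl

theorem probAcc_eq (B : MOQFA Unit n) (u : List Unit) :
    B.probAcc u = ‖mApply B.P (mApply (B.U () ^ u.length) B.ψ0)‖ ^ 2 := by
  rw [probAcc, qState_eq]

def pow (B : MOQFA Unit n) (e : ℕ) : MOQFA Unit n where
  ψ0 := B.ψ0
  ψ0_unit := B.ψ0_unit
  U _ := B.U () ^ e
  U_unitary _ := pow_mem (B.U_unitary ()) e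
  P := B.P
  P_proj := B.P_proj

theorem probAcc_pow (B : MOQFA Unit n) (e : ℕ) (u : List Unit) :
    (B.pow e).probAcc u = B.probAcc (List.replicate (e * u.length) ()) := by
  rw [probAcc_eq, probAcc_eq, List.length_replicate, pow_mul]
  rfl

theorem Recognizes.pow {B : MOQFA Unit n} {e f : ℕ} {lam ε : ℝ} (he : e ≠ 0)
    (hB : B.Recognizes (Ld (e * f)) lam ε) : (B.pow e).Recognizes (Ld f) lam ε := by
  have hmem : ∀ u : List Unit, List.replicate (e * u.length) () ∈ Ld (e * f) ↔ u ∈ Ld f := by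
    intro u
    simp only [mem_Ld_iff, List.length_replicate, Nat.mul_dvd_mul_iff_left (Nat.pos_of_ne_zero he)]
  exact ⟨fun u hu => probAcc_pow B e u ▸ hB.1 _ ((hmem u).2 hu),
    fun u hu => probAcc_pow B e u ▸ hB.2 _ (mt (hmem u).1 hu)⟩

/-- If `U^i ψ₀` and `U^j ψ₀` (`i < j < p`) are `ε`-close, so are `U^p ψ₀` (accepted) and
`U^(p - j + i) ψ₀` (rejected). -/
theorem not_recognizes_Ld_of_lt {p : ℕ} {lam ε : ℝ} (hε : 0 < ε)
    (hp : (1 + 2 / ε) ^ (2 * n) < p) (B : MOQFA Unit n) : ¬ B.Recognizes (Ld p) lam ε := by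
  intro hB
  set W := B.U ()
  have hunit : ∀ k, ‖mApply (W ^ k) B.ψ0‖ = 1 := fun k => by
    rw [norm_mApply_of_mem_unitaryGroup (pow_mem (B.U_unitary ()) k), B.ψ0_unit]
  let v : Fin p → QState n := fun i => mApply (W ^ (i : ℕ)) B.ψ0
  obtain ⟨i, j, hij, hclose⟩ : ∃ i j : Fin p, i ≠ j ∧ dist (v i) (v j) < ε := by
    by_contra! hsep
    have := card_le_of_pairwise_le_dist hε v (fun i => (hunit i).le) hsep
    rw [Fintype.card_fin, finrank_real_qState] at this
    linarith
  wlog hlt : i < j generalizing i j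
  · exact this j i hij.symm (dist_comm (v i) (v j) ▸ hclose) (hij.symm.lt_of_le (not_lt.1 hlt))
  have hshift : ∀ k : Fin p, mApply (W ^ (p - j + k)) B.ψ0 = mApply (W ^ (p - j)) (v k) :=
    fun k => mApply_pow_add W _ _ _
  have hacc := hB.1 (List.replicate p ()) (by simp [mem_Ld_iff])
  have hrej := hB.2 (List.replicate (p - j + i) ()) (by
    rw [mem_Ld_iff, List.length_replicate]
    exact Nat.not_dvd_of_pos_of_lt (by omega) (by omega))
  rw [probAcc_eq, List.length_replicate] at hacc hrej
  have hdist : ‖mApply (W ^ p) B.ψ0 - mApply (W ^ (p - j + i)) B.ψ0‖ = dist (v i) (v j) := by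
    have hp_eq : mApply (W ^ p) B.ψ0 = mApply (W ^ (p - j)) (v j) := by
      rw [← hshift j, Nat.sub_add_cancel j.isLt.le]
    rw [hp_eq, hshift i, ← mApply_sub,
      norm_mApply_of_mem_unitaryGroup (pow_mem (B.U_unitary ()) _), ← dist_eq_norm, dist_comm]
  have := sq_norm_mApply_sub_le B.P_proj (hunit p) (hunit (p - j + i))
  linarith

end MOQFA

theorem Nat.dvd_mul_iff_div_gcd_dvd {N r t : ℕ} (hN : 0 < N) : N ∣ t * r ↔ N / N.gcd r ∣ t := by
  rw [Nat.div_dvd_iff_dvd_mul (Nat.gcd_dvd_left N r) (Nat.gcd_pos_of_pos_left r hN),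
    mul_comm (N.gcd r), ← gcd_eq_nat_gcd]
  exact dvd_mul_gcd_iff_dvd_mul.symm

theorem Function.exists_iterate_mem_periodicPts {α : Type*} [Finite α] (f : α → α) (x : α) :
    ∃ a, f^[a] x ∈ periodicPts f := by
  obtain ⟨a, b, hne, heq⟩ := Finite.exists_ne_map_eq_of_infinite fun m : ℕ => f^[m] x
  wlog hab : a < b generalizing a b
  · exact this b a hne.symm heq.symm (hne.symm.lt_of_le (not_lt.1 hab))
  refine ⟨a, mk_mem_periodicPts (Nat.sub_pos_of_lt hab) ?_⟩
  rw [IsPeriodicPt, IsFixedPt, ← iterate_add_apply, Nat.sub_add_cancel hab.le]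
  exact heq.symm

namespace QFAC
variable {Alph S : Type} {n : ℕ}

def runUnitary (A : QFAC Alph S n) : S → List Alph → Matrix (Fin n) (Fin n) ℂ
  | _, [] => 1
  | s, σ :: w => A.runUnitary (A.tr s σ) w * A.U s σ

theorem runUnitary_mem_unitaryGroup (A : QFAC Alph S n) (s : S) (w : List Alph) :
    A.runUnitary s w ∈ Matrix.unitaryGroup (Fin n) ℂ := by
  induction w generalizing s with
  | nil => exact one_mem _
  | cons σ w ih => exact mul_mem (ih _) (A.U_unitary s σ)

theorem runUnitary_append (A : QFAC Alph S n) (s : S) (x y : List Alph) :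
    A.runUnitary s (x ++ y) = A.runUnitary (x.foldl A.tr s) y * A.runUnitary s x := by
  induction x generalizing s with
  | nil => exact (mul_one _).symm
  | cons σ x ih => rw [List.cons_append, runUnitary, ih, runUnitary, mul_assoc, List.foldl_cons]

theorem qState_eq (A : QFAC Alph S n) (x : List Alph) :
    A.qState x = mApply (A.runUnitary A.s0 x) A.ψ0 := by
  suffices ∀ s v, x.foldl (fun p σ => (A.tr p.1 σ, mApply (A.U p.1 σ) p.2)) (s, v) =
      (x.foldl A.tr s, mApply (A.runUnitary s x) v) by
    rw [qState, this]
  induction x with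
  | nil => exact fun s v => by rw [runUnitary, mApply_one]; rfl
  | cons σ x ih => exact fun s v => by rw [List.foldl_cons, ih, runUnitary, mApply_mul]; rfl

theorem sState_append_s16 (A : QFAC Alph S n) (x y : List Alph) :
    A.sState (x ++ y) = y.foldl A.tr (A.sState x) :=
  List.foldl_append

theorem qState_append (A : QFAC Alph S n) (x y : List Alph) :
    A.qState (x ++ y) = mApply (A.runUnitary (A.sState x) y) (A.qState x) := by
  rw [qState_eq, qState_eq, runUnitary_append, mApply_mul]
  rfl

theorem norm_qState (A : QFAC Alph S n) (x : List Alph) : ‖A.qState x‖ = 1 := by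
  rw [qState_eq, norm_mApply_of_mem_unitaryGroup (A.runUnitary_mem_unitaryGroup _ _), A.ψ0_unit]

section Loop
variable (A : QFAC Alph S n) {s : S} {w : List Alph}

theorem foldl_flatten_replicate (hw : w.foldl A.tr s = s) (t : ℕ) :
    (List.replicate t w).flatten.foldl A.tr s = s := by
  induction t with
  | zero => rfl
  | succ t ih => rw [List.replicate_succ, List.flatten_cons, List.foldl_append, hw, ih]

theorem runUnitary_flatten_replicate (hw : w.foldl A.tr s = s) (t : ℕ) :
    A.runUnitary s (List.replicate t w).flatten = A.runUnitary s w ^ t := by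
  induction t with
  | zero => rfl
  | succ t ih => rw [List.replicate_succ, List.flatten_cons, runUnitary_append, hw, ih, pow_succ]

def loop (x w : List Alph) : MOQFA Unit n where
  ψ0 := A.qState x
  ψ0_unit := A.norm_qState x
  U _ := A.runUnitary (A.sState x) w
  U_unitary _ := A.runUnitary_mem_unitaryGroup _ _
  P := A.P (A.sState x)
  P_proj := A.P_proj _

theorem probAcc_loop {x : List Alph} (hw : w.foldl A.tr (A.sState x) = A.sState x)
    (u : List Unit) :
    (A.loop x w).probAcc u = A.probAcc (x ++ (List.replicate u.length w).flatten) := by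
  rw [MOQFA.probAcc_eq, probAcc, qState_append, sState_append_s16, runUnitary_flatten_replicate A hw,
    foldl_flatten_replicate A hw]
  rfl

end Loop

theorem Recognizes.loop {A : QFAC Unit S n} {N : ℕ} {lam ε : ℝ} (hN : 0 < N)
    (hA : A.Recognizes (Ld N) lam ε) {x w : List Unit} (hx : N ∣ x.length)
    (hw : w.foldl A.tr (A.sState x) = A.sState x) :
    (A.loop x w).Recognizes (Ld (N / N.gcd w.length)) lam ε := by
  have hmem : ∀ u : List Unit,
      x ++ (List.replicate u.length w).flatten ∈ Ld N ↔ u ∈ Ld (N / N.gcd w.length) := by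
    intro u
    simp only [mem_Ld_iff, List.length_append, List.length_flatten, List.map_replicate,
      List.sum_replicate, smul_eq_mul, Nat.dvd_add_right hx, Nat.dvd_mul_iff_div_gcd_dvd hN]
  exact ⟨fun u hu => A.probAcc_loop hw u ▸ hA.1 _ ((hmem u).2 hu),
    fun u hu => A.probAcc_loop hw u ▸ hA.2 _ (mt (hmem u).1 hu)⟩

end QFAC

theorem QFAC.exists_moqfa_recognizes_Ld {S : Type} [Fintype S] {n N : ℕ} {lam ε : ℝ}
    (A : QFAC Unit S n) (hA : A.Recognizes (Ld N) lam ε) (hS : Fintype.card S < N) :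
    ∃ d, d ∣ N ∧ d ≠ 1 ∧ ∃ B : MOQFA Unit n, B.Recognizes (Ld d) lam ε := by
  have hN : 0 < N := by omega
  set f : S → S := fun s => A.tr s ()
  have hfold : ∀ s m, (List.replicate m ()).foldl A.tr s = f^[m] s := fun s m =>
    (List.foldl_const f s _).trans (by rw [List.length_replicate])
  obtain ⟨a, ha⟩ := exists_iterate_mem_periodicPts f A.s0
  set x := List.replicate (a * N) ()
  have hx : A.sState x ∈ periodicPts f := by
    obtain ⟨r, hr, hper⟩ := mem_periodicPts.1 ha
    rw [sState, hfold, ← Nat.sub_add_cancel (Nat.le_mul_of_pos_right a hN), iterate_add_apply]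
    exact mk_mem_periodicPts hr (hper.apply_iterate _)
  set w := List.replicate (minimalPeriod f (A.sState x)) ()
  have hw_pos : 0 < w.length := by
    rw [List.length_replicate]; exact minimalPeriod_pos_of_mem_periodicPts hx
  have hw_lt : w.length < N :=
    (List.length_replicate ..).trans_le minimalPeriod_le_card |>.trans_lt hS
  have hxN : N ∣ x.length := by rw [List.length_replicate]; exact dvd_mul_left N a
  have hw : w.foldl A.tr (A.sState x) = A.sState x := by rw [hfold]; exact iterate_minimalPeriod
  refine ⟨N / N.gcd w.length, Nat.div_dvd_of_dvd (Nat.gcd_dvd_left _ _), fun h1 => ?_, A.loop x w,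
    hA.loop hN hxN hw⟩
  have : N ∣ 1 * w.length := (Nat.dvd_mul_iff_div_gcd_dvd hN).2 (by rw [h1])
  exact absurd (Nat.le_of_dvd hw_pos (one_mul w.length ▸ this)) (not_le.2 hw_lt)

theorem Nat.Prime.eq_of_dvd_mul_of_not_dvd {p q d : ℕ} (hp : p.Prime) (hq : q.Prime)
    (hd : d ∣ p * q) (hd1 : d ≠ 1) (hqd : ¬ q ∣ d) : d = p := by
  have hcop : d.Coprime q := Nat.coprime_comm.1 ((hq.coprime_iff_not_dvd).2 hqd)
  exact (hp.eq_one_or_self_of_dvd d (hcop.dvd_of_dvd_mul_right hd)).resolve_left hd1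

theorem stmt_16_general (lam ε : ℝ) (hε : 0 < ε)
    (q : ℕ) (hq : q.Prime) (n : ℕ)
    (hn : IsLeast {N : ℕ | ∃ A : MOQFA Unit N, A.Recognizes (Ld q) lam ε} n)
    (p : ℕ) (hp : p.Prime) (hpn : (1 + 2 / ε) ^ (2 * n) < (p : ℝ))
    {S : Type} [Fintype S] (k' n' : ℕ) (hk' : Fintype.card S = k') (hn' : n' < n)
    (A : QFAC Unit S n') (hrec : A.Recognizes (Ld (p * q)) lam ε) :
    p * q ≤ k' := by
  by_contra! hk
  obtain ⟨d, hd, hd1, B, hB⟩ := A.exists_moqfa_recognizes_Ld hrec (hk' ▸ hk)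
  by_cases hqd : q ∣ d
  · obtain ⟨e, rfl⟩ := hqd
    have he : e ≠ 0 := by
      rintro rfl
      rw [mul_zero, zero_dvd_iff] at hd
      exact (Nat.mul_pos hp.pos hq.pos).ne' hd
    exact absurd (hn.2 ⟨_, (mul_comm q e ▸ hB).pow he⟩) (not_le.2 hn')
  · have hbound : (1 + 2 / ε) ^ (2 * n') < (p : ℝ) :=
      (pow_le_pow_right₀ (le_add_of_nonneg_right (by positivity)) (by omega)).trans_lt hpn
    exact MOQFA.not_recognizes_Ld_of_lt hε
      (hp.eq_of_dvd_mul_of_not_dvd hq hd hd1 hqd ▸ hbound) B hB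

/-- Fix `lam ∈ (0,1)`, `ε > 0`, `lam − ε > 0`. Let `q` be prime and `n`
the minimal number of quantum basis states of an MO-1QFA recognizing `L(q)` with cut-point
`lam` isolated by `ε`. Let `p` be prime with `p > (1 + 2/ε)^(2n)`. Then any 1QFAC with `k'`
classical and `n' < n` quantum basis states recognizing `L(pq)` with the same cut-point and
isolation has `k' ≥ pq`. -/
theorem stmt_16 (lam ε : ℝ) (hlam : 0 < lam ∧ lam < 1) (hε : 0 < ε) (hlamε : 0 < lam - ε)
    (q : ℕ) (hq : q.Prime) (n : ℕ)
    (hn : IsLeast {N : ℕ | ∃ A : MOQFA Unit N, A.Recognizes (Ld q) lam ε} n)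
    (p : ℕ) (hp : p.Prime) (hpn : (1 + 2 / ε) ^ (2 * n) < (p : ℝ))
    {S : Type} [Fintype S] (k' n' : ℕ) (hk' : Fintype.card S = k') (hn' : n' < n)
    (A : QFAC Unit S n') (hrec : A.Recognizes (Ld (p * q)) lam ε) :
    p * q ≤ k' :=
  stmt_16_general lam ε hε q hq n hn p hp hpn k' n' hk' hn' A hrec
end
end
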